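/- arXiv:1711.00192 — 2 statements merged into one kernel-verified Lean document; each statement's English description precedes it below -/
import Mathlib

section
/- Let A, B be positive invertible bounded linear operators on a Hilbert space and t > s > 0 with 5s + t ≤ 3. If (B^{s/3} A^{(s-t)/3} B^{2t/3} A^{(s-t)/3} B^{2t/3} A^{(s-t)/3} B^{s/3})^{3/(5s+t)} ≥ B, then log B ≥ log A. -/
open CFC

variable {H : Type*} [NormedAddCommGroup H] [InnerProductSpace ℂ H] [CompleteSpace H]

noncomputable section LHAux

open scoped NNReal
open Filter Topology

namespace Stmt12Aux

variable {𝒜 : Type*} [CStarAlgebra 𝒜] [PartialOrder 𝒜] [StarOrderedRing 𝒜]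

lemma rpow_mul_rpow {a : 𝒜} (hu : IsUnit a) (ha : 0 ≤ a) (x y : ℝ) :
    a ^ x * a ^ y = a ^ (x + y) :=
  (CFC.rpow_add hu).symm

lemma star_rpow (a : 𝒜) (x : ℝ) : star (a ^ x) = a ^ x :=
  (IsSelfAdjoint.of_nonneg CFC.rpow_nonneg)

lemma isUnit_rpow {a : 𝒜} (hu : IsUnit a) (ha : 0 ≤ a) (x : ℝ) : IsUnit (a ^ x) := by
  refine ⟨⟨a ^ x, a ^ (-x), ?_, ?_⟩, rfl⟩
  · rw [rpow_mul_rpow hu ha, add_neg_cancel, CFC.rpow_zero a ha]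
  · rw [rpow_mul_rpow hu ha, neg_add_cancel, CFC.rpow_zero a ha]

lemma le_rpow_iff_norm {a b : 𝒜} (hau : IsUnit a) (hbu : IsUnit b) (ha : 0 ≤ a) (hb : 0 ≤ b)
    {r : ℝ} (hr : r ≠ 0) :
    a ^ r ≤ b ^ r ↔ ‖a ^ (r / 2) * b ^ (-(r / 2))‖ ≤ 1 := by
  have h1 : CFC.sqrt (a ^ r) = a ^ (r / 2) := by
    rw [CFC.sqrt_eq_rpow, CFC.rpow_rpow a r _ hr (hau.isStrictlyPositive ha)]
    congr 1
    ring
  have h2 : (b ^ r) ^ (-(1 / 2) : ℝ) = b ^ (-(r / 2)) := by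
    rw [CFC.rpow_rpow b r _ hr (hbu.isStrictlyPositive hb)]
    congr 1
    ring
  rw [le_iff_norm_sqrt_mul_rpow (a ^ r) (b ^ r) CFC.rpow_nonneg ((isUnit_rpow hbu hb r).isStrictlyPositive CFC.rpow_nonneg), h1, h2]

lemma norm_of_le_rpow [Nontrivial 𝒜] {a b : 𝒜} (hau : IsUnit a) (hbu : IsUnit b)
    (ha : 0 ≤ a) (hb : 0 ≤ b) {r : ℝ} (h : a ^ r ≤ b ^ r) :
    ‖a ^ (r / 2) * b ^ (-(r / 2))‖ ≤ 1 := by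
  rcases eq_or_ne r 0 with hr | hr
  · subst hr
    norm_num [CFC.rpow_zero a ha, CFC.rpow_zero b hb]
  · exact (le_rpow_iff_norm hau hbu ha hb hr).mp h

lemma midpoint_rpow [Nontrivial 𝒜] {a b : 𝒜} (hau : IsUnit a) (hbu : IsUnit b)
    (ha : 0 ≤ a) (hb : 0 ≤ b) {p q : ℝ} (hp : a ^ p ≤ b ^ p) (hq : a ^ q ≤ b ^ q) :
    a ^ ((p + q) / 2) ≤ b ^ ((p + q) / 2) := by
  set m : ℝ := (p + q) / 2 with hm
  have hnp := norm_of_le_rpow hau hbu ha hb hp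
  have hnq := norm_of_le_rpow hau hbu ha hb hq
  have hnp' : ‖b ^ (-(p / 2)) * a ^ (p / 2)‖ ≤ 1 := by
    rw [← norm_star, star_mul, star_rpow, star_rpow]
    exact hnp
  set z : 𝒜 := b ^ (-(m / 2)) * a ^ m * b ^ (-(m / 2)) with hz
  have hz0 : 0 ≤ z := by
    have := star_left_conjugate_nonneg (CFC.rpow_nonneg (a := a) (y := m)) (b ^ (-(m / 2)))
    rwa [star_rpow] at this
  -- spectrum chain
  have e1 : spectrum ℝ z \ {0} =
      spectrum ℝ ((a ^ (q / 2) * b ^ (-(q / 2))) * (b ^ (-(p / 2)) * a ^ (p / 2))) \ {0} := by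
    calc spectrum ℝ z \ {0}
        = spectrum ℝ ((a ^ m * b ^ (-(m / 2))) * b ^ (-(m / 2))) \ {0} := by
          rw [hz, mul_assoc]
          exact spectrum.nonzero_mul_comm _ _
      _ = spectrum ℝ (a ^ m * b ^ (-m)) \ {0} := by
          have hbb : b ^ (-(m / 2)) * b ^ (-(m / 2)) = b ^ (-m) := by
            rw [rpow_mul_rpow hbu hb]; congr 1; ring
          rw [mul_assoc, hbb]
      _ = spectrum ℝ ((a ^ (q / 2) * b ^ (-m)) * a ^ (p / 2)) \ {0} := by
          have : a ^ m = a ^ (p / 2) * a ^ (q / 2) := by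
            rw [rpow_mul_rpow hau ha]; congr 1; rw [hm]; ring
          rw [this, mul_assoc]
          exact spectrum.nonzero_mul_comm _ _
      _ = spectrum ℝ ((a ^ (q / 2) * b ^ (-(q / 2))) * (b ^ (-(p / 2)) * a ^ (p / 2))) \ {0} := by
          have : b ^ (-m) = b ^ (-(q / 2)) * b ^ (-(p / 2)) := by
            rw [rpow_mul_rpow hbu hb]; congr 1; rw [hm]; ring
          rw [this, ← mul_assoc, ← mul_assoc, mul_assoc (a ^ (q/2) * b ^ (-(q/2)))]
  have key : ∀ x ∈ spectrum ℝ z, ‖(id x : ℝ)‖ ≤ 1 := by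
    intro x hx
    rcases eq_or_ne x 0 with h0 | h0
    · simp [h0]
    · have hx' : x ∈ spectrum ℝ ((a ^ (q / 2) * b ^ (-(q / 2))) * (b ^ (-(p / 2)) * a ^ (p / 2))) := by
        have : x ∈ spectrum ℝ z \ {0} := ⟨hx, h0⟩
        rw [e1] at this
        exact this.1
      calc ‖(id x : ℝ)‖ ≤ ‖(a ^ (q / 2) * b ^ (-(q / 2))) * (b ^ (-(p / 2)) * a ^ (p / 2))‖ :=
            spectrum.norm_le_norm_of_mem hx'
        _ ≤ ‖a ^ (q / 2) * b ^ (-(q / 2))‖ * ‖b ^ (-(p / 2)) * a ^ (p / 2)‖ := norm_mul_le _ _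
        _ ≤ 1 * 1 := mul_le_mul hnq hnp' (norm_nonneg _) zero_le_one
        _ = 1 := one_mul 1
  have hz1 : z ≤ 1 := by
    refine (CStarAlgebra.norm_le_one_iff_of_nonneg z hz0).mp ?_
    have hzsa : IsSelfAdjoint z := .of_nonneg hz0
    calc ‖z‖ = ‖cfc (id : ℝ → ℝ) z‖ := by rw [cfc_id ℝ z]
      _ ≤ 1 := norm_cfc_le zero_le_one key
  -- conjugate back
  have hconj := star_left_conjugate_le_conjugate hz1 (b ^ (m / 2))
  rw [star_rpow] at hconj
  have e2 : b ^ (m / 2) * z * b ^ (m / 2) = a ^ m := by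
    rw [hz]
    calc b ^ (m / 2) * (b ^ (-(m / 2)) * a ^ m * b ^ (-(m / 2))) * b ^ (m / 2)
        = (b ^ (m / 2) * b ^ (-(m / 2))) * a ^ m * (b ^ (-(m / 2)) * b ^ (m / 2)) := by
          noncomm_ring
      _ = a ^ m := by
          rw [rpow_mul_rpow hbu hb, rpow_mul_rpow hbu hb]
          norm_num [CFC.rpow_zero b hb]
  have e3 : b ^ (m / 2) * 1 * b ^ (m / 2) = b ^ m := by
    rw [mul_one, rpow_mul_rpow hbu hb]
    norm_num
  rw [e2, e3] at hconj
  exact hconj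

lemma dyadic_rpow [Nontrivial 𝒜] {a b : 𝒜} (hau : IsUnit a) (hbu : IsUnit b)
    (ha : 0 ≤ a) (hb : 0 ≤ b) (hab : a ≤ b) :
    ∀ n k : ℕ, k ≤ 2 ^ n → a ^ ((k : ℝ) / 2 ^ n) ≤ b ^ ((k : ℝ) / 2 ^ n) := by
  intro n
  induction n with
  | zero =>
    intro k hk
    interval_cases k
    · norm_num [CFC.rpow_zero a ha, CFC.rpow_zero b hb]
    · norm_num [CFC.rpow_one a ha, CFC.rpow_one b hb, hab]
  | succ n ih =>
    intro k hk
    rcases Nat.even_or_odd k with ⟨j, hj⟩ | ⟨j, hj⟩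
    · have hj' : j ≤ 2 ^ n := by omega
      have : (k : ℝ) / 2 ^ (n + 1) = (j : ℝ) / 2 ^ n := by
        subst hj; push_cast; ring
      rw [this]
      exact ih j hj'
    · have hj1 : j + 1 ≤ 2 ^ n := by omega
      have hj0 : j ≤ 2 ^ n := by omega
      have hmid := midpoint_rpow hau hbu ha hb (ih j hj0) (ih (j + 1) hj1)
      have heq : ((j : ℝ) / 2 ^ n + (((j + 1 : ℕ)) : ℝ) / 2 ^ n) / 2 = (k : ℝ) / 2 ^ (n + 1) := by
        subst hj; push_cast; ring
      rwa [heq] at hmid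

lemma rpow_eq_cfc_real {a : 𝒜} (ha : 0 ≤ a) (r : ℝ) :
    a ^ r = cfc (fun x : ℝ => x ^ r) a := by
  rw [CFC.rpow_def, cfc_nnreal_eq_real (fun x : ℝ≥0 => x ^ r) a ha]
  refine cfc_congr fun x hx => ?_
  have hx0 : 0 ≤ x := spectrum_nonneg_of_nonneg ha hx
  rw [NNReal.coe_rpow, Real.coe_toNNReal x hx0]

lemma rpow_eq_exp_smul_log {a : 𝒜} (hau : IsUnit a) (ha : 0 ≤ a) (r : ℝ) :
    a ^ r = NormedSpace.exp (r • CFC.log a) := by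
  have hpos : ∀ x ∈ spectrum ℝ a, 0 < x := by
    intro x hx
    refine lt_of_le_of_ne (spectrum_nonneg_of_nonneg ha hx) ?_
    intro h0
    exact spectrum.zero_notMem ℝ hau (h0 ▸ hx)
  have hlogcont : ContinuousOn Real.log (spectrum ℝ a) :=
    Real.continuousOn_log.mono fun x hx => by
      simpa using (hpos x hx).ne'
  have hsmulcont : ContinuousOn (fun x : ℝ => r • Real.log x) (spectrum ℝ a) :=
    hlogcont.const_smul r
  have h1 : r • CFC.log a = cfc (fun x : ℝ => r • Real.log x) a := by
    rw [CFC.log, cfc_smul r Real.log a hlogcont]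
  have hsa : IsSelfAdjoint (cfc (fun x : ℝ => r • Real.log x) a) := cfc_predicate _ a
  rw [h1, ← real_exp_eq_normedSpace_exp hsa,
    ← cfc_comp' Real.exp (fun x : ℝ => r • Real.log x) a Real.continuous_exp.continuousOn
      hsmulcont]
  rw [rpow_eq_cfc_real ha r]
  refine cfc_congr fun x hx => ?_
  rw [Real.rpow_def_of_pos (hpos x hx), mul_comm, smul_eq_mul]

lemma continuous_rpow_exponent {a : 𝒜} (hau : IsUnit a) (ha : 0 ≤ a) :
    Continuous (fun r : ℝ => a ^ r) := by
  have : (fun r : ℝ => a ^ r) = fun r : ℝ => NormedSpace.exp (r • CFC.log a) := by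
    funext r
    exact rpow_eq_exp_smul_log hau ha r
  rw [this]
  let +nondep : NormedAlgebra ℚ 𝒜 := .restrictScalars ℚ ℝ 𝒜
  exact NormedSpace.exp_continuous.comp (continuous_id.smul continuous_const)

/-- Löwner–Heinz for invertible elements. -/
lemma loewner_heinz {a b : 𝒜} (hau : IsUnit a) (hbu : IsUnit b)
    (ha : 0 ≤ a) (hb : 0 ≤ b) (hab : a ≤ b) {r : ℝ} (hr0 : 0 ≤ r) (hr1 : r ≤ 1) :
    a ^ r ≤ b ^ r := by
  rcases subsingleton_or_nontrivial 𝒜 with hsub | hnt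
  · exact le_of_eq (Subsingleton.elim _ _)
  set f : ℕ → ℝ := fun n => (⌊r * 2 ^ n⌋₊ : ℝ) / 2 ^ n with hf
  have hfS : ∀ n, a ^ f n ≤ b ^ f n := by
    intro n
    refine dyadic_rpow hau hbu ha hb hab n _ ?_
    have : r * 2 ^ n ≤ ((2 ^ n : ℕ) : ℝ) := by
      push_cast
      nlinarith [pow_pos (show (0:ℝ) < 2 by norm_num) n]
    calc ⌊r * 2 ^ n⌋₊ ≤ ⌊((2 ^ n : ℕ) : ℝ)⌋₊ := Nat.floor_le_floor this
      _ = 2 ^ n := Nat.floor_natCast _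
  have hflim : Filter.Tendsto f Filter.atTop (𝓝 r) := by
    have hub : ∀ n, f n ≤ r := by
      intro n
      rw [hf]
      have h2 : (0:ℝ) < 2 ^ n := pow_pos (by norm_num) n
      rw [div_le_iff₀ h2]
      exact Nat.floor_le (by positivity)
    have hlb : ∀ n, r - 1 / 2 ^ n ≤ f n := by
      intro n
      have h2 : (0:ℝ) < 2 ^ n := pow_pos (by norm_num) n
      rw [hf, sub_le_iff_le_add, ← add_div, le_div_iff₀ h2]
      have := Nat.lt_floor_add_one (r * 2 ^ n)
      linarith
    have hgeom : Filter.Tendsto (fun n : ℕ => (1:ℝ) / 2 ^ n) Filter.atTop (𝓝 0) := by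
      simp only [one_div, ← inv_pow]
      exact tendsto_pow_atTop_nhds_zero_of_lt_one (by norm_num) (by norm_num)
    have h1 : Filter.Tendsto (fun n : ℕ => r - 1 / 2 ^ n) Filter.atTop (𝓝 r) := by
      simpa using tendsto_const_nhds.sub hgeom
    exact tendsto_of_tendsto_of_tendsto_of_le_of_le h1 tendsto_const_nhds hlb hub
  have hcont : Filter.Tendsto (fun n => b ^ f n - a ^ f n) Filter.atTop (𝓝 (b ^ r - a ^ r)) := by
    exact (((continuous_rpow_exponent hbu hb).tendsto r).comp hflim).sub
      (((continuous_rpow_exponent hau ha).tendsto r).comp hflim)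
  have hmem : 0 ≤ b ^ r - a ^ r := by
    have := CStarAlgebra.isClosed_nonneg (A := 𝒜) |>.mem_of_tendsto hcont
      (Filter.Eventually.of_forall fun n => sub_nonneg.mpr (hfS n))
    simpa using this
  exact sub_nonneg.mp hmem

end Stmt12Aux

end LHAux


open scoped NNReal in
set_option maxHeartbeats 2000000 in
set_option synthInstance.maxHeartbeats 1000000 in
open Stmt12Aux Filter Topology in
theorem stmt12 (A B : H →L[ℂ] H) (hA : 0 ≤ A) (hAu : IsUnit A) (hB : 0 ≤ B) (hBu : IsUnit B) (s t : ℝ)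
    (hs : 0 < s) (hst : s < t) (h1 : 5*s + t ≤ 3)
    (h : (B ^ (s/3) * A ^ ((s-t)/3) * B ^ (2*t/3) * A ^ ((s-t)/3) * B ^ (2*t/3) * A ^ ((s-t)/3) * B ^ (s/3)) ^ (3/(5*s+t)) ≥ B) :
    CFC.log B ≥ CFC.log A := by
  set u : ℝ := (s-t)/3 with hudef
  set α : ℝ := 3/(5*s+t) with hαdef
  set X : H →L[ℂ] H := B ^ (s/3) * A ^ u * B ^ (2*t/3) * A ^ u * B ^ (2*t/3) * A ^ u * B ^ (s/3)
    with hXdef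
  have h5st : (0:ℝ) < 5*s + t := by linarith
  have hα : (0:ℝ) < α := by rw [hαdef]; positivity
  set β : ℝ := (5*s+t)/3 with hβdef
  have hβ0 : (0:ℝ) < β := by rw [hβdef]; positivity
  have hβ1 : β ≤ 1 := by rw [hβdef]; linarith
  have hu2 : A ^ u = A ^ (u/2) * A ^ (u/2) := by
    rw [rpow_mul_rpow hAu hA]; congr 1; ring
  -- X is positive
  have hX0 : 0 ≤ X := by
    have hWW : star (A ^ (u/2) * B ^ (2*t/3) * A ^ u * B ^ (s/3)) *
        (A ^ (u/2) * B ^ (2*t/3) * A ^ u * B ^ (s/3)) = X := by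
      simp only [star_mul, star_rpow, ← mul_assoc]
      rw [mul_assoc (B ^ (s/3) * A ^ u * B ^ (2*t/3)) (A ^ (u/2)) (A ^ (u/2)), ← hu2, hXdef]
    exact hWW ▸ star_mul_self_nonneg _
  have hXu : IsUnit X := by
    rw [hXdef]
    exact ((((((isUnit_rpow hBu hB _).mul (isUnit_rpow hAu hA _)).mul
      (isUnit_rpow hBu hB _)).mul (isUnit_rpow hAu hA _)).mul
      (isUnit_rpow hBu hB _)).mul (isUnit_rpow hAu hA _)).mul (isUnit_rpow hBu hB _)
  -- Step 1: B ^ β ≤ X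
  have hBle : B ≤ X ^ α := h
  have hXαu : IsUnit (X ^ α) := isUnit_rpow hXu hX0 α
  have h2 : B ^ β ≤ (X ^ α) ^ β :=
    loewner_heinz hBu hXαu hB CFC.rpow_nonneg hBle hβ0.le hβ1
  have h3 : (X ^ α) ^ β = X := by
    rw [CFC.rpow_rpow X α β (ne_of_gt hα) (hXu.isStrictlyPositive hX0),
      show α * β = 1 by rw [hαdef, hβdef]; field_simp]
    exact CFC.rpow_one X hX0
  rw [h3] at h2
  -- Step 2: conjugate by B ^ v
  set v : ℝ := (t-s)/3 with hvdef
  have hvpos : (0:ℝ) < v := by rw [hvdef]; linarith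
  have h4 := star_left_conjugate_le_conjugate h2 (B ^ v)
  rw [star_rpow] at h4
  have hL : B ^ v * B ^ β * B ^ v = B ^ (s+t) := by
    rw [rpow_mul_rpow hBu hB, rpow_mul_rpow hBu hB]
    congr 1; rw [hvdef, hβdef]; ring
  set G : H →L[ℂ] H := B ^ (t/3) * A ^ u * B ^ (t/3) with hGdef
  have hBB : B ^ v * B ^ (s/3) = B ^ (t/3) := by
    rw [rpow_mul_rpow hBu hB]; congr 1; rw [hvdef]; ring
  have hBB' : B ^ (s/3) * B ^ v = B ^ (t/3) := by
    rw [rpow_mul_rpow hBu hB]; congr 1; rw [hvdef]; ring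
  have htt : B ^ (t/3) * B ^ (t/3) = B ^ (2*t/3) := by
    rw [rpow_mul_rpow hBu hB]; congr 1; ring
  have hR : B ^ v * X * B ^ v = G ^ 3 := by
    rw [hXdef, hGdef, show (3:ℕ) = 2 + 1 from rfl, pow_succ, pow_two]
    simp only [← mul_assoc]
    rw [hBB, mul_assoc _ (B ^ (s/3)) (B ^ v), hBB']
    rw [mul_assoc _ (B ^ (t/3)) (B ^ (t/3)), htt, mul_assoc _ (B ^ (t/3)) (B ^ (t/3)), htt]
  -- Step 3: cube root
  have hG0 : 0 ≤ G := by
    have hWW : star (A ^ (u/2) * B ^ (t/3)) * (A ^ (u/2) * B ^ (t/3)) = G := by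
      simp only [star_mul, star_rpow, ← mul_assoc]
      rw [mul_assoc (B ^ (t/3)) (A ^ (u/2)) (A ^ (u/2)), ← hu2, hGdef]
    exact hWW ▸ star_mul_self_nonneg _
  have hGu : IsUnit G := by
    rw [hGdef]
    exact ((isUnit_rpow hBu hB _).mul (isUnit_rpow hAu hA _)).mul (isUnit_rpow hBu hB _)
  have h4' : B ^ (s+t) ≤ G ^ ((3:ℕ):ℝ) := by
    rw [CFC.rpow_natCast G 3 hG0]
    calc B ^ (s+t) = B ^ v * B ^ β * B ^ v := hL.symm
      _ ≤ B ^ v * X * B ^ v := h4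
      _ = G ^ 3 := hR
  have h5 : B ^ ((s+t)/3) ≤ G := by
    have hst0 : s + t ≠ 0 := ne_of_gt (by linarith)
    have := loewner_heinz (isUnit_rpow hBu hB (s+t)) (isUnit_rpow hGu hG0 _)
      CFC.rpow_nonneg CFC.rpow_nonneg h4' (r := 1/3) (by norm_num) (by norm_num)
    rwa [CFC.rpow_rpow B (s+t) (1/3) hst0 (hBu.isStrictlyPositive hB),
      CFC.rpow_rpow G ((3:ℕ):ℝ) (1/3) (by norm_num) (hGu.isStrictlyPositive hG0),
      show (s+t) * (1/3) = (s+t)/3 by ring,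
      show ((3:ℕ):ℝ) * (1/3) = 1 by push_cast; norm_num,
      CFC.rpow_one G hG0] at this
  -- Step 4: B ^ u ≤ A ^ u
  have h6 : B ^ u ≤ A ^ u := by
    have hc := star_left_conjugate_le_conjugate h5 (B ^ (-(t/3)))
    rw [star_rpow] at hc
    have hL2 : B ^ (-(t/3)) * B ^ ((s+t)/3) * B ^ (-(t/3)) = B ^ u := by
      rw [rpow_mul_rpow hBu hB, rpow_mul_rpow hBu hB]
      congr 1; rw [hudef]; ring
    have hR2 : B ^ (-(t/3)) * G * B ^ (-(t/3)) = A ^ u := by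
      rw [hGdef]
      simp only [← mul_assoc]
      rw [rpow_mul_rpow hBu hB (-(t/3)) (t/3),
        mul_assoc _ (B ^ (t/3)) (B ^ (-(t/3))), rpow_mul_rpow hBu hB (t/3) (-(t/3)),
        show (-(t/3) + t/3 : ℝ) = 0 by ring, show (t/3 + -(t/3) : ℝ) = 0 by ring,
        CFC.rpow_zero B hB, one_mul, mul_one]
    rw [hL2, hR2] at hc
    exact hc
  -- Step 5: A ^ v ≤ B ^ v
  have h7 : A ^ v ≤ B ^ v := by
    have huv : -u = v := by rw [hudef, hvdef]; ring
    let uA : (H →L[ℂ] H)ˣ := ⟨A ^ u, A ^ (-u),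
      by rw [rpow_mul_rpow hAu hA, add_neg_cancel, CFC.rpow_zero A hA],
      by rw [rpow_mul_rpow hAu hA, neg_add_cancel, CFC.rpow_zero A hA]⟩
    let uB : (H →L[ℂ] H)ˣ := ⟨B ^ u, B ^ (-u),
      by rw [rpow_mul_rpow hBu hB, add_neg_cancel, CFC.rpow_zero B hB],
      by rw [rpow_mul_rpow hBu hB, neg_add_cancel, CFC.rpow_zero B hB]⟩
    have hinv := CStarAlgebra.inv_le_inv (a := uB) (b := uA) CFC.rpow_nonneg h6
    have hinv' : A ^ (-u) ≤ B ^ (-u) := hinv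
    rwa [huv] at hinv'
  -- Step 6: take logarithms via the limit of difference quotients
  show CFC.log A ≤ CFC.log B
  set c : ℕ → ℝ := fun k => v / 2 ^ k with hcdef
  have hcpos : ∀ k, 0 < c k := fun k => by rw [hcdef]; positivity
  have hord : ∀ k, A ^ (c k) ≤ B ^ (c k) := by
    intro k
    have h2k : (1:ℝ) ≤ 2 ^ k := one_le_pow₀ (by norm_num)
    have := loewner_heinz (isUnit_rpow hAu hA v) (isUnit_rpow hBu hB v)
      CFC.rpow_nonneg CFC.rpow_nonneg h7 (r := 1/2^k) (by positivity)
      (by rw [div_le_one (by positivity)]; exact h2k)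
    rwa [CFC.rpow_rpow A v _ (ne_of_gt hvpos) (hAu.isStrictlyPositive hA),
      CFC.rpow_rpow B v _ (ne_of_gt hvpos) (hBu.isStrictlyPositive hB),
      show v * (1/2^k) = c k by rw [hcdef]; ring] at this
  have hc0 : Tendsto c atTop (nhdsWithin 0 {x : ℝ | x ≠ 0}) := by
    refine tendsto_nhdsWithin_of_tendsto_nhds_of_eventually_within _ ?_
      (Eventually.of_forall fun k => (hcpos k).ne')
    have : Tendsto (fun k : ℕ => v * (1/2) ^ k) atTop (𝓝 (v * 0)) :=
      (tendsto_pow_atTop_nhds_zero_of_lt_one (by norm_num) (by norm_num)).const_mul v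
    simpa [hcdef, div_pow, mul_one_div, div_eq_mul_inv] using this
  have hdA : HasDerivAt (fun r : ℝ => NormedSpace.exp (r • CFC.log A)) (CFC.log A) 0 := by
    simpa using hasDerivAt_exp_smul_const (CFC.log A) (0:ℝ)
  have hdB : HasDerivAt (fun r : ℝ => NormedSpace.exp (r • CFC.log B)) (CFC.log B) 0 := by
    simpa using hasDerivAt_exp_smul_const (CFC.log B) (0:ℝ)
  have htA : Tendsto (fun k => slope (fun r : ℝ => NormedSpace.exp (r • CFC.log A)) 0 (c k))
      atTop (𝓝 (CFC.log A)) := (hasDerivAt_iff_tendsto_slope.mp hdA).comp hc0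
  have htB : Tendsto (fun k => slope (fun r : ℝ => NormedSpace.exp (r • CFC.log B)) 0 (c k))
      atTop (𝓝 (CFC.log B)) := (hasDerivAt_iff_tendsto_slope.mp hdB).comp hc0
  have hsub := htB.sub htA
  have hmem : ∀ k, 0 ≤ slope (fun r : ℝ => NormedSpace.exp (r • CFC.log B)) 0 (c k) -
      slope (fun r : ℝ => NormedSpace.exp (r • CFC.log A)) 0 (c k) := by
    intro k
    have e : slope (fun r : ℝ => NormedSpace.exp (r • CFC.log B)) 0 (c k) -
        slope (fun r : ℝ => NormedSpace.exp (r • CFC.log A)) 0 (c k) =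
        (c k)⁻¹ • (B ^ (c k) - A ^ (c k)) := by
      rw [slope_def_module, slope_def_module, ← rpow_eq_exp_smul_log hBu hB,
        ← rpow_eq_exp_smul_log hAu hA]
      simp only [zero_smul, NormedSpace.exp_zero, sub_zero, ← smul_sub]
      congr 1
      abel
    rw [e]
    exact smul_nonneg (inv_nonneg.mpr (hcpos k).le) (sub_nonneg.mpr (hord k))
  have hlim := (CStarAlgebra.isClosed_nonneg (A := H →L[ℂ] H)).mem_of_tendsto hsub
    (Eventually.of_forall hmem)
  have : (0 : H →L[ℂ] H) ≤ CFC.log B - CFC.log A := by simpa using hlim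
  exact sub_nonneg.mp this
end

section
/- Let A, B be positive invertible bounded linear operators on a Hilbert space, and let t > s > 0 and p ≥ 4s. If (B^{s/p} A^{(s-t)/p} B^{2t/p} A^{(s-t)/p} B^{s/p})^{p/(4s)} ≥ B, then log B ≥ log A; and if additionally t - s ≥ p, then B ≥ A. -/
open CFC NNReal Filter Topology

section Aux

variable {A : Type*} [CStarAlgebra A] [PartialOrder A] [StarOrderedRing A]

lemma my_isUnit_rpow {a : A} (ha : 0 ≤ a) (hu : IsUnit a) (x : ℝ) : IsUnit (a ^ x) := by
  have h0 : 0 ∉ spectrum ℝ≥0 a := spectrum.zero_notMem ℝ≥0 hu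
  exact ⟨⟨a ^ x, a ^ (-x), CFC.rpow_mul_rpow_neg x (hu.isStrictlyPositive ha), CFC.rpow_neg_mul_rpow x (hu.isStrictlyPositive ha)⟩, rfl⟩

lemma my_conj_le_conj {x y : A} (c : A) (hc : 0 ≤ c) (h : x ≤ y) : c * x * c ≤ c * y * c := by
  have := star_left_conjugate_le_conjugate h c
  rwa [(IsSelfAdjoint.of_nonneg hc).star_eq] at this

lemma my_cancel_left {a : A} (ha : 0 ≤ a) (hu : IsUnit a) (x : ℝ) (y : A) :
    a ^ (-x) * (a ^ x * y) = y := by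
  rw [← mul_assoc, CFC.rpow_neg_mul_rpow x (hu.isStrictlyPositive ha), one_mul]

lemma my_cancel_right {a : A} (ha : 0 ≤ a) (hu : IsUnit a) (x : ℝ) (y : A) :
    y * a ^ x * a ^ (-x) = y := by
  rw [mul_assoc, CFC.rpow_mul_rpow_neg x (hu.isStrictlyPositive ha), mul_one]

lemma my_rpow_rpow {a : A} (ha : 0 ≤ a) (hu : IsUnit a) (x y : ℝ) :
    (a ^ x) ^ y = a ^ (x * y) := by
  rcases eq_or_ne x 0 with rfl | hx
  · rw [CFC.rpow_zero a ha, CFC.one_rpow, zero_mul, CFC.rpow_zero a ha]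
  · exact CFC.rpow_rpow a x y hx (hu.isStrictlyPositive ha)

lemma my_rpow_add {a : A} (ha : 0 ≤ a) (hu : IsUnit a) (x y : ℝ) :
    a ^ (x + y) = a ^ x * a ^ y :=
  CFC.rpow_add hu

lemma my_rpow_le_rpow_of_contraction {a b : A} (ha : 0 ≤ a) (hb : 0 ≤ b)
    (hau : IsUnit a) (hbu : IsUnit b) {w x y : ℝ} (hxy : x + y = -w)
    (hX : ‖b ^ x * a ^ w * b ^ y‖ ≤ 1) : a ^ w ≤ b ^ w := by
  nontriviality A
  set X := b ^ x * a ^ w * b ^ y with hXdef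
  set P := b ^ (-(w/2)) * a ^ w * b ^ (-(w/2)) with hPdef
  have hbw : ∀ z : ℝ, (0:A) ≤ b ^ z := fun z => CFC.rpow_nonneg
  have hP0 : (0:A) ≤ P := by
    rw [hPdef]
    simpa using my_conj_le_conj (b ^ (-(w/2))) (hbw _) (CFC.rpow_nonneg (a := a) (y := w))
  -- similarity : P = u * X * u⁻¹ with u = b ^ d, d = -(w/2) - x
  set d : ℝ := -(w/2) - x with hd
  have hu : IsUnit (b ^ d) := my_isUnit_rpow hb hbu d
  have hconj : b ^ d * X * b ^ (-d) = P := by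
    rw [hXdef, hPdef]
    have h1 : b ^ d * (b ^ x * a ^ w * b ^ y) * b ^ (-d)
        = (b ^ d * b ^ x) * a ^ w * (b ^ y * b ^ (-d)) := by noncomm_ring
    rw [h1, ← my_rpow_add hb hbu, ← my_rpow_add hb hbu]
    have : d + x = -(w/2) := by rw [hd]; ring
    have h2 : y + -d = -(w/2) := by rw [hd]; linarith [hxy]
    rw [this, h2]
  have hspec : spectrum ℝ P = spectrum ℝ X := by
    rw [← hconj]
    have hinv : (↑hu.unit⁻¹ : A) = b ^ (-d) := by
      apply hu.unit.inv_eq_of_mul_eq_one_right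
      simpa using CFC.rpow_mul_rpow_neg d (hbu.isStrictlyPositive hb)
    rw [show b ^ d * X * b ^ (-d) = ↑hu.unit * X * ↑hu.unit⁻¹ by rw [hinv, IsUnit.unit_spec]]
    exact spectrum.units_conjugate
  have hnormP : ‖P‖ ≤ 1 := by
    have hmem : ‖P‖ ∈ spectrum ℝ P := CStarAlgebra.norm_mem_spectrum_of_nonneg hP0
    rw [hspec] at hmem
    calc ‖P‖ ≤ ‖(‖P‖)‖ := le_abs_self _
    _ ≤ ‖X‖ := spectrum.norm_le_norm_of_mem hmem
    _ ≤ 1 := hX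
  have hP1 : P ≤ 1 := (CStarAlgebra.norm_le_one_iff_of_nonneg P hP0).mp hnormP
  have := my_conj_le_conj (b ^ (w/2)) (hbw _) hP1
  calc a ^ w = b ^ (w/2) * P * b ^ (w/2) := by
        rw [hPdef]
        have : b ^ (w/2) * (b ^ (-(w/2)) * a ^ w * b ^ (-(w/2))) * b ^ (w/2)
            = (b ^ (w/2) * b ^ (-(w/2))) * a ^ w * (b ^ (-(w/2)) * b ^ (w/2)) := by noncomm_ring
        rw [this, CFC.rpow_mul_rpow_neg _ (hbu.isStrictlyPositive hb),
          CFC.rpow_neg_mul_rpow _ (hbu.isStrictlyPositive hb), one_mul, mul_one]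
    _ ≤ b ^ (w/2) * 1 * b ^ (w/2) := this
    _ = b ^ w := by
        rw [mul_one, ← my_rpow_add hb hbu]; norm_num

lemma my_sa_rpow {a : A} : IsSelfAdjoint (a ^ (x : ℝ)) := .of_nonneg CFC.rpow_nonneg

lemma my_norm_le_one {X : A} (h : X * star X ≤ 1) : ‖X‖ ≤ 1 := by
  nontriviality A
  have h0 : (0:A) ≤ X * star X := mul_star_self_nonneg X
  have : ‖X * star X‖ ≤ 1 := by
    calc ‖X * star X‖ ≤ ‖(1:A)‖ := CStarAlgebra.norm_le_norm_of_nonneg_of_le h0 h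
    _ = 1 := CStarRing.norm_one
  rw [CStarRing.norm_self_mul_star] at this
  nlinarith [norm_nonneg X]

/-- key lemma : `a^u * b^c * a^u ≤ b^(c+2u)` implies `a^u ≤ b^u`. -/
lemma my_key {a b : A} (ha : 0 ≤ a) (hb : 0 ≤ b) (hau : IsUnit a) (hbu : IsUnit b)
    {u c : ℝ} (h : a ^ u * b ^ c * a ^ u ≤ b ^ (c + 2*u)) : a ^ u ≤ b ^ u := by
  set X := b ^ (-(c/2 + u)) * a ^ u * b ^ (c/2) with hXdef
  have hsX : star X = b ^ (c/2) * a ^ u * b ^ (-(c/2 + u)) := by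
    rw [hXdef]
    simp only [star_mul, (IsSelfAdjoint.of_nonneg (CFC.rpow_nonneg (a := a) (y := u))).star_eq,
      (IsSelfAdjoint.of_nonneg (CFC.rpow_nonneg (a := b) (y := c/2))).star_eq,
      (IsSelfAdjoint.of_nonneg (CFC.rpow_nonneg (a := b) (y := -(c/2 + u)))).star_eq]
    noncomm_ring
  have hXX : X * star X = b ^ (-(c/2 + u)) * (a ^ u * b ^ c * a ^ u) * b ^ (-(c/2 + u)) := by
    rw [hXdef, hsX]
    have hcc : b ^ (c/2) * b ^ (c/2) = b ^ c := by
      rw [← my_rpow_add hb hbu]; norm_num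
    calc b ^ (-(c/2 + u)) * a ^ u * b ^ (c/2) * (b ^ (c/2) * a ^ u * b ^ (-(c/2 + u)))
        = b ^ (-(c/2 + u)) * (a ^ u * ((b ^ (c/2) * b ^ (c/2)) * a ^ u)) * b ^ (-(c/2 + u)) := by
          noncomm_ring
      _ = _ := by rw [hcc]; noncomm_ring
  have hle : X * star X ≤ 1 := by
    rw [hXX]
    calc b ^ (-(c/2 + u)) * (a ^ u * b ^ c * a ^ u) * b ^ (-(c/2 + u))
        ≤ b ^ (-(c/2 + u)) * b ^ (c + 2*u) * b ^ (-(c/2 + u)) :=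
          my_conj_le_conj _ CFC.rpow_nonneg h
      _ = 1 := by
          rw [← my_rpow_add hb hbu, ← my_rpow_add hb hbu,
            show -(c/2 + u) + (c + 2*u) + -(c/2 + u) = 0 by ring, CFC.rpow_zero b hb]
  exact my_rpow_le_rpow_of_contraction ha hb hau hbu
    (show -(c/2 + u) + c/2 = -u by ring) (my_norm_le_one hle)

lemma my_midpoint {a b : A} (ha : 0 ≤ a) (hb : 0 ≤ b) (hau : IsUnit a) (hbu : IsUnit b)
    {al be : ℝ} (h1 : a ^ al ≤ b ^ al) (h2 : a ^ be ≤ b ^ be) :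
    a ^ ((al + be)/2) ≤ b ^ ((al + be)/2) := by
  set g : ℝ := (al + be)/2 with hg
  have hbinv : b ^ (-al) ≤ a ^ (-al) := by
    have := CStarAlgebra.rpow_neg_one_le_rpow_neg_one h1
      ((my_isUnit_rpow ha hau al).isStrictlyPositive (CFC.rpow_nonneg (a := a) (y := al)))
    rwa [my_rpow_rpow hb hbu, my_rpow_rpow ha hau, mul_neg_one] at this
  have hmid : a ^ g * b ^ (-al) * a ^ g ≤ a ^ be := by
    calc a ^ g * b ^ (-al) * a ^ g ≤ a ^ g * a ^ (-al) * a ^ g :=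
          my_conj_le_conj _ CFC.rpow_nonneg hbinv
      _ = a ^ be := by
          rw [← my_rpow_add ha hau, ← my_rpow_add ha hau]
          congr 1
          rw [hg]; ring
  set X := b ^ (-(be/2)) * a ^ g * b ^ (-(al/2)) with hXdef
  have hsX : star X = b ^ (-(al/2)) * a ^ g * b ^ (-(be/2)) := by
    rw [hXdef]
    simp only [star_mul, (IsSelfAdjoint.of_nonneg (CFC.rpow_nonneg (a := a) (y := g))).star_eq,
      (IsSelfAdjoint.of_nonneg (CFC.rpow_nonneg (a := b) (y := -(al/2)))).star_eq,
      (IsSelfAdjoint.of_nonneg (CFC.rpow_nonneg (a := b) (y := -(be/2)))).star_eq]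
    noncomm_ring
  have hXX : X * star X = b ^ (-(be/2)) * (a ^ g * b ^ (-al) * a ^ g) * b ^ (-(be/2)) := by
    rw [hXdef, hsX]
    have hcc : b ^ (-(al/2)) * b ^ (-(al/2)) = b ^ (-al) := by
      rw [← my_rpow_add hb hbu]; congr 1; ring
    calc b ^ (-(be/2)) * a ^ g * b ^ (-(al/2)) * (b ^ (-(al/2)) * a ^ g * b ^ (-(be/2)))
        = b ^ (-(be/2)) * (a ^ g * ((b ^ (-(al/2)) * b ^ (-(al/2))) * a ^ g)) * b ^ (-(be/2)) := by
          noncomm_ring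
      _ = _ := by rw [hcc]; noncomm_ring
  have hle : X * star X ≤ 1 := by
    rw [hXX]
    calc b ^ (-(be/2)) * (a ^ g * b ^ (-al) * a ^ g) * b ^ (-(be/2))
        ≤ b ^ (-(be/2)) * a ^ be * b ^ (-(be/2)) := my_conj_le_conj _ CFC.rpow_nonneg hmid
      _ ≤ b ^ (-(be/2)) * b ^ be * b ^ (-(be/2)) := my_conj_le_conj _ CFC.rpow_nonneg h2
      _ = 1 := by
          rw [← my_rpow_add hb hbu, ← my_rpow_add hb hbu,
            show -(be/2) + be + -(be/2) = 0 by ring, CFC.rpow_zero b hb]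
  exact my_rpow_le_rpow_of_contraction ha hb hau hbu
    (show -(be/2) + -(al/2) = -g by rw [hg]; ring) (my_norm_le_one hle)

lemma my_rpow_eq_real_cfc {a : A} (ha : 0 ≤ a) (y : ℝ) :
    a ^ y = cfc (fun x : ℝ => x ^ y) a := by
  rw [CFC.rpow_def, cfc_nnreal_eq_real _ _ ha]
  refine cfc_congr fun x hx => ?_
  have hx0 : 0 ≤ x := spectrum_nonneg_of_nonneg ha hx
  simp [NNReal.coe_rpow, Real.coe_toNNReal x hx0]

lemma my_norm_rpow_sub_le {a : A} (ha : 0 ≤ a) (hau : IsUnit a) {v w cb : ℝ} (hc : 0 ≤ cb)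
    (hpt : ∀ x ∈ spectrum ℝ a, |x ^ v - x ^ w| ≤ cb) : ‖a ^ v - a ^ w‖ ≤ cb := by
  have hpos : ∀ x ∈ spectrum ℝ a, 0 < x := fun x hx =>
    lt_of_le_of_ne (spectrum_nonneg_of_nonneg ha hx)
      (fun h => spectrum.zero_notMem ℝ hau (h ▸ hx))
  have hcont : ∀ z : ℝ, ContinuousOn (fun x : ℝ => x ^ z) (spectrum ℝ a) := fun z x hx =>
    (Real.continuousAt_rpow_const x z (Or.inl (hpos x hx).ne')).continuousWithinAt
  rw [my_rpow_eq_real_cfc ha v, my_rpow_eq_real_cfc ha w, ← cfc_sub _ _ a (hcont v) (hcont w)]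
  exact norm_cfc_le hc fun x hx => by simpa [Real.norm_eq_abs] using hpt x hx

open Filter in
lemma my_tendsto_rpow {a : A} (ha : 0 ≤ a) (hau : IsUnit a) {u : ℕ → ℝ} {θ : ℝ}
    (hu0 : ∀ n, 0 ≤ u n) (hu1 : ∀ n, u n ≤ 1) (hθ0 : 0 ≤ θ) (hθ1 : θ ≤ 1)
    (hcv : Tendsto u atTop (nhds θ)) :
    Tendsto (fun n => a ^ (u n)) atTop (nhds (a ^ θ)) := by
  nontriviality A
  have hpos : ∀ x ∈ spectrum ℝ a, 0 < x := fun x hx =>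
    lt_of_le_of_ne (spectrum_nonneg_of_nonneg ha hx)
      (fun h => spectrum.zero_notMem ℝ hau (h ▸ hx))
  have hne : (spectrum ℝ a).Nonempty := ⟨‖a‖, CStarAlgebra.norm_mem_spectrum_of_nonneg ha⟩
  obtain ⟨r, hrmem, hrmin⟩ := (spectrum.isCompact (𝕜 := ℝ) a).exists_isMinOn hne continuousOn_id
  have hr : 0 < r := hpos r hrmem
  have hrle : ∀ x ∈ spectrum ℝ a, r ≤ x := fun x hx => hrmin hx
  have hMle : ∀ x ∈ spectrum ℝ a, x ≤ ‖a‖ := fun x hx =>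
    (le_abs_self x).trans (spectrum.norm_le_norm_of_mem hx)
  set L : ℝ := max |Real.log r| |Real.log ‖a‖| + 1 with hL
  have hL1 : 1 ≤ L := by
    nlinarith [abs_nonneg (Real.log r), le_max_left |Real.log r| |Real.log ‖a‖|]
  have hL0 : 0 < L := by linarith
  have hlogx : ∀ x ∈ spectrum ℝ a, |Real.log x| ≤ L := by
    intro x hx
    have hx0 := hpos x hx
    rw [abs_le]
    constructor
    · have := Real.log_le_log hr (hrle x hx)
      have h2 : -|Real.log r| ≤ Real.log r := neg_abs_le _
      have : -(max |Real.log r| |Real.log ‖a‖|) ≤ Real.log r := by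
        have := le_max_left |Real.log r| |Real.log ‖a‖|
        linarith
      linarith [Real.log_le_log hr (hrle x hx)]
    · have h1 := Real.log_le_log hx0 (hMle x hx)
      have h2 : Real.log ‖a‖ ≤ |Real.log ‖a‖| := le_abs_self _
      have h3 := le_max_right |Real.log r| |Real.log ‖a‖|
      linarith
  set C : ℝ := max 1 ‖a‖ with hC
  have hC0 : 0 < C := lt_of_lt_of_le one_pos (le_max_left _ _)
  -- pointwise bound
  have hptbd : ∀ (v : ℝ), 0 ≤ v → v ≤ 1 → |v - θ| * L ≤ 1 →
      ∀ x ∈ spectrum ℝ a, |x ^ v - x ^ θ| ≤ C * (2 * (|v - θ| * L)) := by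
    intro v hv0 hv1 hsmall x hx
    have hx0 := hpos x hx
    have hxv : x ^ v - x ^ θ = x ^ θ * (x ^ (v - θ) - 1) := by
      rw [mul_sub, mul_one, ← Real.rpow_add hx0]
      ring_nf
    have hlog := hlogx x hx
    have habs : |(v - θ) * Real.log x| ≤ |v - θ| * L := by
      rw [abs_mul]
      exact mul_le_mul_of_nonneg_left hlog (abs_nonneg _)
    have hexp : |x ^ (v - θ) - 1| ≤ 2 * |(v - θ) * Real.log x| := by
      rw [Real.rpow_def_of_pos hx0, mul_comm (Real.log x)]
      exact Real.abs_exp_sub_one_le (habs.trans hsmall)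
    have hxθ : x ^ θ ≤ C := by
      rcases le_total x 1 with hx1 | hx1
      · exact (Real.rpow_le_one hx0.le hx1 hθ0).trans (le_max_left _ _)
      · calc x ^ θ ≤ x ^ (1:ℝ) := Real.rpow_le_rpow_of_exponent_le hx1 hθ1
          _ = x := Real.rpow_one x
          _ ≤ ‖a‖ := hMle x hx
          _ ≤ C := le_max_right _ _
    have hxθ0 : (0:ℝ) ≤ x ^ θ := Real.rpow_nonneg hx0.le θ
    calc |x ^ v - x ^ θ| = x ^ θ * |x ^ (v - θ) - 1| := by
          rw [hxv, abs_mul, abs_of_nonneg hxθ0]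
      _ ≤ C * (2 * |(v - θ) * Real.log x|) := by
          apply mul_le_mul hxθ hexp (abs_nonneg _) hC0.le
      _ ≤ C * (2 * (|v - θ| * L)) := by
          have := mul_le_mul_of_nonneg_left habs (by norm_num : (0:ℝ) ≤ 2)
          exact mul_le_mul_of_nonneg_left this hC0.le
  -- squeeze
  have h0 : Tendsto (fun n => |u n - θ|) atTop (nhds 0) := by
    have := (hcv.sub (tendsto_const_nhds (x := θ) (f := atTop))).abs
    simpa using this
  rw [tendsto_iff_norm_sub_tendsto_zero]
  apply squeeze_zero' (Eventually.of_forall fun n => norm_nonneg _)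
  · filter_upwards [h0.eventually_le_const (show (0:ℝ) < 1/L by positivity)] with n hn
    have hsmall : |u n - θ| * L ≤ 1 := by
      rw [← le_div_iff₀ hL0]; exact hn
    exact my_norm_rpow_sub_le ha hau (by positivity)
      (hptbd (u n) (hu0 n) (hu1 n) hsmall)
  · have : Tendsto (fun n => C * (2 * (|u n - θ| * L))) atTop (nhds (C * (2 * (0 * L)))) :=
      (((h0.mul_const L).const_mul 2).const_mul C)
    simpa using this

theorem my_loewner_heinz {a b : A} (ha : 0 ≤ a) (hau : IsUnit a) (hab : a ≤ b)
    {θ : ℝ} (hθ0 : 0 ≤ θ) (hθ1 : θ ≤ 1) : a ^ θ ≤ b ^ θ := by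
  have hb : 0 ≤ b := ha.trans hab
  have hbu : IsUnit b := CStarAlgebra.isUnit_of_le a hab (hau.isStrictlyPositive ha)
  -- dyadic case
  have hdy : ∀ n k : ℕ, k ≤ 2^n → a ^ ((k : ℝ)/2^n) ≤ b ^ ((k:ℝ)/2^n) := by
    intro n
    induction n with
    | zero =>
      intro k hk
      interval_cases k
      · simp only [Nat.cast_zero, zero_div, pow_zero]
        rw [CFC.rpow_zero a ha, CFC.rpow_zero b hb]
      · simp only [Nat.cast_one, pow_zero, div_one]
        rwa [CFC.rpow_one a ha, CFC.rpow_one b hb]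
    | succ n ih =>
      intro k hk
      have hpow : (2:ℕ)^(n+1) = 2 * 2^n := by ring
      have h1 : k/2 ≤ 2^n := by omega
      have h2 : k - k/2 ≤ 2^n := by omega
      have hmid := my_midpoint ha hb hau hbu (ih (k/2) h1) (ih (k - k/2) h2)
      have hexp : (((k/2:ℕ):ℝ)/2^n + ((k - k/2 : ℕ):ℝ)/2^n)/2 = (k:ℝ)/2^(n+1) := by
        have hsum : ((k/2:ℕ):ℝ) + ((k - k/2:ℕ):ℝ) = (k:ℝ) := by
          have : (k/2:ℕ) + (k - k/2) = k := by omega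
          exact_mod_cast congrArg (Nat.cast : ℕ → ℝ) this
        rw [← add_div, hsum, div_div, ← pow_succ]
      rwa [hexp] at hmid
  -- approximation
  set u : ℕ → ℝ := fun n => ((⌊θ * 2^n⌋₊ : ℕ) : ℝ)/2^n with hu
  have hkle : ∀ n : ℕ, ⌊θ * 2^n⌋₊ ≤ 2^n := by
    intro n
    have h1 : θ * 2^n ≤ ((2^n : ℕ) : ℝ) := by
      push_cast
      nlinarith [pow_pos (show (0:ℝ) < 2 by norm_num) n]
    calc ⌊θ * 2^n⌋₊ ≤ ⌊((2^n : ℕ) : ℝ)⌋₊ := Nat.floor_le_floor h1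
      _ = 2^n := Nat.floor_natCast _
  have hu0 : ∀ n, 0 ≤ u n := fun n => by positivity
  have hu1 : ∀ n, u n ≤ 1 := by
    intro n
    rw [hu, div_le_one (by positivity)]
    calc ((⌊θ * 2^n⌋₊ : ℕ) : ℝ) ≤ ((2^n : ℕ) : ℝ) := by exact_mod_cast hkle n
      _ = 2^n := by push_cast; ring
  have hule : ∀ n, θ - 1/2^n ≤ u n ∧ u n ≤ θ := by
    intro n
    have hp : (0:ℝ) < 2^n := by positivity
    have hθ2 : 0 ≤ θ * 2^n := by positivity
    constructor
    · have h3 : θ * 2^n - 1 ≤ ((⌊θ * 2^n⌋₊ : ℕ) : ℝ) := by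
        have := Nat.lt_floor_add_one (θ * 2^n)
        push_cast at this ⊢
        linarith
      have h4 : (θ * 2^n - 1)/2^n ≤ u n := by
        show (θ * 2^n - 1)/2^n ≤ ((⌊θ * 2^n⌋₊ : ℕ) : ℝ)/2^n
        gcongr
      calc θ - 1/2^n = (θ * 2^n - 1)/2^n := by field_simp
        _ ≤ u n := h4
    · rw [hu, div_le_iff₀ hp]
      exact Nat.floor_le hθ2
  have hhalf : Tendsto (fun n : ℕ => (1:ℝ)/2^n) atTop (nhds 0) := by
    have := tendsto_pow_atTop_nhds_zero_of_lt_one (show (0:ℝ) ≤ 1/2 by norm_num)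
      (show (1:ℝ)/2 < 1 by norm_num)
    simpa [div_pow] using this
  have hcv : Tendsto u atTop (nhds θ) := by
    apply tendsto_of_tendsto_of_tendsto_of_le_of_le (g := fun n : ℕ => θ - 1/2^n)
      (h := fun _ : ℕ => θ)
    · simpa using (tendsto_const_nhds (x := θ) (f := atTop)).sub hhalf
    · exact tendsto_const_nhds
    · exact fun n => (hule n).1
    · exact fun n => (hule n).2
  have hat := my_tendsto_rpow ha hau hu0 hu1 hθ0 hθ1 hcv
  have hbt := my_tendsto_rpow hb hbu hu0 hu1 hθ0 hθ1 hcv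
  have htd : Tendsto (fun n => b ^ u n - a ^ u n) atTop (nhds (b ^ θ - a ^ θ)) := hbt.sub hat
  have hmem : b ^ θ - a ^ θ ∈ {x : A | 0 ≤ x} := by
    refine (CStarAlgebra.isClosed_nonneg).mem_of_tendsto htd (Filter.Eventually.of_forall ?_)
    intro n
    exact sub_nonneg.mpr (hdy n ⌊θ * 2^n⌋₊ (hkle n))
  exact sub_nonneg.mp hmem

open Filter in
lemma my_tendsto_log {a : A} (ha : 0 ≤ a) (hau : IsUnit a) {v : ℕ → ℝ}
    (hv0 : ∀ n, 0 < v n) (hcv : Tendsto v atTop (nhds 0)) :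
    Tendsto (fun n => (v n)⁻¹ • (a ^ (v n) - 1)) atTop (nhds (CFC.log a)) := by
  nontriviality A
  have hpos : ∀ x ∈ spectrum ℝ a, 0 < x := fun x hx =>
    lt_of_le_of_ne (spectrum_nonneg_of_nonneg ha hx)
      (fun h => spectrum.zero_notMem ℝ hau (h ▸ hx))
  have hne : (spectrum ℝ a).Nonempty := ⟨‖a‖, CStarAlgebra.norm_mem_spectrum_of_nonneg ha⟩
  obtain ⟨r, hrmem, hrmin⟩ := (spectrum.isCompact (𝕜 := ℝ) a).exists_isMinOn hne continuousOn_id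
  have hr : 0 < r := hpos r hrmem
  have hrle : ∀ x ∈ spectrum ℝ a, r ≤ x := fun x hx => hrmin hx
  have hMle : ∀ x ∈ spectrum ℝ a, x ≤ ‖a‖ := fun x hx =>
    (le_abs_self x).trans (spectrum.norm_le_norm_of_mem hx)
  set L : ℝ := max |Real.log r| |Real.log ‖a‖| + 1 with hL
  have hL1 : 1 ≤ L := by
    nlinarith [abs_nonneg (Real.log r), le_max_left |Real.log r| |Real.log ‖a‖|]
  have hL0 : 0 < L := by linarith
  have hlogx : ∀ x ∈ spectrum ℝ a, |Real.log x| ≤ L := by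
    intro x hx
    have hx0 := hpos x hx
    rw [abs_le]
    refine ⟨?_, ?_⟩
    · have h1 := Real.log_le_log hr (hrle x hx)
      have h2 : -(max |Real.log r| |Real.log ‖a‖|) ≤ Real.log r := by
        have h3 := le_max_left |Real.log r| |Real.log ‖a‖|
        have h4 := neg_abs_le (Real.log r)
        linarith
      linarith
    · have h1 := Real.log_le_log hx0 (hMle x hx)
      have h2 : Real.log ‖a‖ ≤ |Real.log ‖a‖| := le_abs_self _
      have h3 := le_max_right |Real.log r| |Real.log ‖a‖|
      linarith
  -- cfc identity
  have hcontrpow : ∀ z : ℝ, ContinuousOn (fun x : ℝ => x ^ z) (spectrum ℝ a) := fun z x hx =>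
    (Real.continuousAt_rpow_const x z (Or.inl (hpos x hx).ne')).continuousWithinAt
  have hcontlog : ContinuousOn Real.log (spectrum ℝ a) := fun x hx =>
    (Real.continuousAt_log (hpos x hx).ne').continuousWithinAt
  have hkey : ∀ n, (v n)⁻¹ • (a ^ (v n) - 1) - CFC.log a
      = cfc (fun x : ℝ => (v n)⁻¹ • (x ^ (v n) - 1) - Real.log x) a := by
    intro n
    rw [cfc_sub (fun x : ℝ => (v n)⁻¹ • (x ^ (v n) - 1)) Real.log a
      (by exact ((hcontrpow (v n)).sub (continuousOn_const (c := (1:ℝ)))).const_smul ((v n)⁻¹)) hcontlog,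
      cfc_smul ((v n)⁻¹) (fun x : ℝ => x ^ (v n) - 1) a
      (by exact (hcontrpow (v n)).sub continuousOn_const),
      cfc_sub (fun x : ℝ => x ^ (v n)) (fun _ => 1) a (hcontrpow (v n)) continuousOn_const,
      cfc_const_one ℝ a, ← my_rpow_eq_real_cfc ha (v n)]
    rfl
  -- pointwise bound
  have hptbd : ∀ n, v n * L ≤ 1 → ∀ x ∈ spectrum ℝ a,
      |(v n)⁻¹ • (x ^ (v n) - 1) - Real.log x| ≤ v n * L^2 := by
    intro n hsmall x hx
    have hx0 := hpos x hx
    have hvn := hv0 n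
    set c : ℝ := Real.log x * v n with hc
    have hcabs : |c| ≤ v n * L := by
      rw [hc, abs_mul, abs_of_pos hvn, mul_comm]
      exact mul_le_mul_of_nonneg_left (hlogx x hx) hvn.le
    have hc1 : |c| ≤ 1 := hcabs.trans hsmall
    have hxv : x ^ (v n) = Real.exp c := by rw [hc, Real.rpow_def_of_pos hx0]
    have hid : (v n)⁻¹ • (x ^ (v n) - 1) - Real.log x = (Real.exp c - 1 - c) * (v n)⁻¹ := by
      rw [hxv, smul_eq_mul]
      field_simp [hc]
      ring
    rw [hid, abs_mul, abs_of_pos (inv_pos.mpr hvn)]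
    have hexp : |Real.exp c - 1 - c| ≤ (v n * L) ^ 2 := by
      calc |Real.exp c - 1 - c| ≤ c ^ 2 := Real.abs_exp_sub_one_sub_id_le hc1
        _ = |c| ^ 2 := (sq_abs c).symm
        _ ≤ (v n * L)^2 := pow_le_pow_left₀ (_root_.abs_nonneg _) hcabs 2
    calc |Real.exp c - 1 - c| * (v n)⁻¹ ≤ (v n * L)^2 * (v n)⁻¹ := by
          apply mul_le_mul_of_nonneg_right hexp (inv_pos.mpr hvn).le
      _ = v n * L^2 := by field_simp
  -- squeeze
  rw [tendsto_iff_norm_sub_tendsto_zero]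
  apply squeeze_zero' (Eventually.of_forall fun n => norm_nonneg _)
    (g := fun n => v n * L^2)
  · filter_upwards [hcv.eventually_le_const (show (0:ℝ) < 1/L by positivity)] with n hn
    have hsmall : v n * L ≤ 1 := by
      rw [← le_div_iff₀ hL0]; exact hn
    rw [hkey n]
    exact norm_cfc_le (mul_nonneg (hv0 n).le (by positivity)) fun x hx => by
      simpa [Real.norm_eq_abs] using hptbd n hsmall x hx
  · have := hcv.mul_const (L^2)
    rw [zero_mul] at this
    exact this

lemma my_log_le_log {a b : A} (ha : 0 ≤ a) (hb : 0 ≤ b) (hau : IsUnit a) (hbu : IsUnit b)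
    {u : ℝ} (hu : 0 < u) (h : a ^ u ≤ b ^ u) : CFC.log a ≤ CFC.log b := by
  set v : ℕ → ℝ := fun n => u/(n+1) with hv
  have hv0 : ∀ n, 0 < v n := fun n => by positivity
  have hcv : Tendsto v atTop (nhds 0) := by
    rw [hv]
    simpa [div_eq_mul_inv] using (tendsto_const_nhds (x := u) (f := atTop)).mul tendsto_one_div_add_atTop_nhds_zero_nat
  have hvle : ∀ n, a ^ (v n) ≤ b ^ (v n) := by
    intro n
    have hn1 : (0:ℝ) < (n:ℝ) + 1 := by positivity
    have hθ := my_loewner_heinz (CFC.rpow_nonneg (a := a) (y := u))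
      (my_isUnit_rpow ha hau u) h (show (0:ℝ) ≤ 1/(n+1) by positivity)
      (by rw [div_le_one hn1]; linarith)
    rwa [my_rpow_rpow ha hau, my_rpow_rpow hb hbu,
      show u * (1/((n:ℝ)+1)) = v n by rw [hv]; ring] at hθ
  have hat := my_tendsto_log ha hau hv0 hcv
  have hbt := my_tendsto_log hb hbu hv0 hcv
  have htd : Tendsto (fun n => (v n)⁻¹ • (b ^ (v n) - 1) - (v n)⁻¹ • (a ^ (v n) - 1))
      atTop (nhds (CFC.log b - CFC.log a)) := hbt.sub hat
  have hmem : CFC.log b - CFC.log a ∈ {x : A | 0 ≤ x} := by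
    refine (CStarAlgebra.isClosed_nonneg).mem_of_tendsto htd (Filter.Eventually.of_forall ?_)
    intro n
    have : (v n)⁻¹ • (b ^ (v n) - 1) - (v n)⁻¹ • (a ^ (v n) - 1)
        = (v n)⁻¹ • (b ^ (v n) - a ^ (v n)) := by
      rw [← smul_sub]; congr 1; abel
    rw [Set.mem_setOf_eq, this]
    exact smul_nonneg (inv_pos.mpr (hv0 n)).le (sub_nonneg.mpr (hvle n))
  exact sub_nonneg.mp hmem

end Aux

variable {H : Type*} [NormedAddCommGroup H] [InnerProductSpace ℂ H] [CompleteSpace H]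

set_option maxHeartbeats 1000000 in
theorem stmt15 (A B : H →L[ℂ] H) (hA : 0 ≤ A) (hAu : IsUnit A) (hB : 0 ≤ B) (hBu : IsUnit B) (s t p : ℝ)
    (hs : 0 < s) (hst : s < t) (h1 : 4*s ≤ p)
    (h : (B ^ (s/p) * A ^ ((s-t)/p) * B ^ (2*t/p) * A ^ ((s-t)/p) * B ^ (s/p)) ^ (p/(4*s)) ≥ B) :
    CFC.log B ≥ CFC.log A ∧ (p ≤ t - s → B ≥ A) := by
  have hp : 0 < p := lt_of_lt_of_le (by positivity) h1
  set u : ℝ := (t - s)/p with hu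
  have hu0 : 0 < u := by rw [hu]; exact div_pos (by linarith) hp
  have hb : (s - t)/p = -u := by rw [hu]; ring
  set C : H →L[ℂ] H := B ^ (s/p) * A ^ ((s-t)/p) * B ^ (2*t/p) * A ^ ((s-t)/p) * B ^ (s/p)
    with hCdef
  set Y : H →L[ℂ] H := B ^ (t/p) * A ^ ((s-t)/p) * B ^ (s/p) with hYdef
  have hsaA : ∀ z : ℝ, star (A ^ z) = A ^ z := fun z =>
    (IsSelfAdjoint.of_nonneg (CFC.rpow_nonneg (a := A) (y := z))).star_eq
  have hsaB : ∀ z : ℝ, star (B ^ z) = B ^ z := fun z =>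
    (IsSelfAdjoint.of_nonneg (CFC.rpow_nonneg (a := B) (y := z))).star_eq
  have hC : C = star Y * Y := by
    rw [hYdef, hCdef]
    simp only [star_mul, hsaA, hsaB]
    have h2t : B ^ (t/p) * B ^ (t/p) = B ^ (2*t/p) := by
      rw [← my_rpow_add hB hBu]; congr 1; ring
    calc B ^ (s/p) * A ^ ((s-t)/p) * B ^ (2*t/p) * A ^ ((s-t)/p) * B ^ (s/p)
        = B ^ (s/p) * A ^ ((s-t)/p) * (B ^ (t/p) * B ^ (t/p)) * A ^ ((s-t)/p) * B ^ (s/p) := by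
          rw [h2t]
      _ = B ^ (s/p) * A ^ ((s-t)/p) * B ^ (t/p) * (B ^ (t/p) * A ^ ((s-t)/p) * B ^ (s/p)) := by
          noncomm_ring
  have hC0 : (0:H →L[ℂ] H) ≤ C := by rw [hC]; exact star_mul_self_nonneg Y
  have hYu : IsUnit Y := by
    rw [hYdef]
    exact ((my_isUnit_rpow hB hBu (t/p)).mul (my_isUnit_rpow hA hAu ((s-t)/p))).mul
      (my_isUnit_rpow hB hBu (s/p))
  have hCu : IsUnit C := by rw [hC]; exact hYu.star.mul hYu
  -- step 1 : Loewner-Heinz with exponent 4s/p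
  have hq1 : 4*s/p ≤ 1 := by rw [div_le_one hp]; linarith
  have hq0 : (0:ℝ) ≤ 4*s/p := by positivity
  have hBC : B ^ (4*s/p) ≤ C := by
    have := my_loewner_heinz hB hBu h hq0 hq1
    rwa [my_rpow_rpow hC0 hCu, show p/(4*s) * (4*s/p) = 1 by field_simp,
      CFC.rpow_one C hC0] at this
  -- step 2 : conjugate by B ^ (-(s/p))
  have h2 : B ^ (2*s/p) ≤ A ^ ((s-t)/p) * B ^ (2*t/p) * A ^ ((s-t)/p) := by
    have hconj := my_conj_le_conj (B ^ (-(s/p))) CFC.rpow_nonneg hBC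
    have hL : B ^ (-(s/p)) * B ^ (4*s/p) * B ^ (-(s/p)) = B ^ (2*s/p) := by
      rw [← my_rpow_add hB hBu, ← my_rpow_add hB hBu]; congr 1; ring
    have hR : B ^ (-(s/p)) * C * B ^ (-(s/p))
        = A ^ ((s-t)/p) * B ^ (2*t/p) * A ^ ((s-t)/p) := by
      rw [hCdef]
      calc B ^ (-(s/p)) * (B ^ (s/p) * A ^ ((s-t)/p) * B ^ (2*t/p) * A ^ ((s-t)/p) * B ^ (s/p))
            * B ^ (-(s/p))
          = (B ^ (-(s/p)) * B ^ (s/p)) * (A ^ ((s-t)/p) * B ^ (2*t/p) * A ^ ((s-t)/p))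
            * (B ^ (s/p) * B ^ (-(s/p))) := by noncomm_ring
        _ = _ := by
            rw [CFC.rpow_neg_mul_rpow _ (hBu.isStrictlyPositive hB),
              CFC.rpow_mul_rpow_neg _ (hBu.isStrictlyPositive hB), one_mul, mul_one]
    rwa [hL, hR] at hconj
  -- step 3 : conjugate by A ^ u
  have h3 : A ^ u * B ^ (2*s/p) * A ^ u ≤ B ^ (2*t/p) := by
    have hconj := my_conj_le_conj (A ^ u) CFC.rpow_nonneg h2
    have hR : A ^ u * (A ^ ((s-t)/p) * B ^ (2*t/p) * A ^ ((s-t)/p)) * A ^ u = B ^ (2*t/p) := by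
      rw [hb]
      calc A ^ u * (A ^ (-u) * B ^ (2*t/p) * A ^ (-u)) * A ^ u
          = (A ^ u * A ^ (-u)) * B ^ (2*t/p) * (A ^ (-u) * A ^ u) := by noncomm_ring
        _ = _ := by
            rw [CFC.rpow_mul_rpow_neg _ (hAu.isStrictlyPositive hA),
              CFC.rpow_neg_mul_rpow _ (hAu.isStrictlyPositive hA), one_mul, mul_one]
    rwa [hR] at hconj
  -- step 4 : key lemma
  have hAB : A ^ u ≤ B ^ u := by
    apply my_key hA hB hAu hBu (c := 2*s/p)
    rwa [show 2*s/p + 2*u = 2*t/p by rw [hu]; field_simp; ring]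
  refine ⟨my_log_le_log hA hB hAu hBu hu0 hAB, fun hpts => ?_⟩
  have hts : 0 < t - s := by linarith
  have hθ1 : p/(t-s) ≤ 1 := by rw [div_le_one hts]; linarith
  have := my_loewner_heinz (CFC.rpow_nonneg (a := A) (y := u)) (my_isUnit_rpow hA hAu u)
    hAB (show (0:ℝ) ≤ p/(t-s) by positivity) hθ1
  rwa [my_rpow_rpow hA hAu, my_rpow_rpow hB hBu,
    show u * (p/(t-s)) = 1 by rw [hu]; field_simp,
    CFC.rpow_one A hA, CFC.rpow_one B hB] at this
end
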